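/- The B_3 orbit function C_{(1,0,1)} as a polynomial in the fundamental orbit functions: For all x = (x₁,x₂,x₃) ∈ ℝ³, 8[cos(3πx₁)cos(πx₂)cos(πx₃) + cos(πx₁)cos(3πx₂)cos(πx₃) + cos(πx₁)cos(πx₂)cos(3πx₃)] = u₁u₃ − 3u₃, where u₁ = 2(cos 2πx₁ + cos 2πx₂ + cos 2πx₃) and u₃ = 8 cos πx₁ cos πx₂ cos πx₃. -/
import Mathlib

open Real

/-- The `B₃` orbit function `C_{(1,0,1)}` as a polynomial in the fundamental orbit
functions: `Σ_i 8 cos 3πx_i Π_{j≠i} cos πx_j = u₁u₃ − 3u₃`. -/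
theorem B3_C101_polynomial (x₁ x₂ x₃ u₁ u₃ : ℝ)
    (hu₁ : u₁ = 2 * (cos (2 * π * x₁) + cos (2 * π * x₂) + cos (2 * π * x₃)))
    (hu₃ : u₃ = 8 * cos (π * x₁) * cos (π * x₂) * cos (π * x₃)) :
    8 * (cos (3 * π * x₁) * cos (π * x₂) * cos (π * x₃)
      + cos (π * x₁) * cos (3 * π * x₂) * cos (π * x₃)
      + cos (π * x₁) * cos (π * x₂) * cos (3 * π * x₃)) = u₁ * u₃ - 3 * u₃ := by
  have h3 : ∀ y : ℝ, cos (3 * π * y) = 4 * cos (π * y) ^ 3 - 3 * cos (π * y) := by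
    intro y
    have := Real.cos_three_mul (π * y)
    rw [show 3 * π * y = 3 * (π * y) by ring] at *
    linarith [this]
  have h2 : ∀ y : ℝ, cos (2 * π * y) = 2 * cos (π * y) ^ 2 - 1 := by
    intro y
    have := Real.cos_sq (π * y)
    rw [show 2 * π * y = 2 * (π * y) by ring]
    rw [Real.cos_two_mul]
  rw [hu₁, hu₃, h3, h3, h3, h2, h2, h2]; ring
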